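/- If P(t) and Q(t) are two proper rational parametrizations of C and the reparametrizing curve 𝔊(P) has at least one rational component, then the reparametrizing curve 𝔊(Q) also has at least one rational component; that is, having a rational component of the reparametrizing curve is independent of the choice of proper parametrization of C. -/

import Mathlib

noncomputable section

namespace ConchoidPaper

open Polynomial

variable {K : Type*} [Field K]

/-- The squared norm `‖P‖² = b(P,P)` for the bilinear form
`b((x₁,x₂),(y₁,y₂)) = x₁y₁ + x₂y₂` on `K²`. -/
def normSq (P : K × K) : K := P.1 * P.1 + P.2 * P.2

/-- The zero set in `K²` of a bivariate polynomial (variables `X 0 ↦ y₁`, `X 1 ↦ y₂`). -/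
def zeroSet (f : MvPolynomial (Fin 2) K) : Set (K × K) :=
  {x | MvPolynomial.eval ![x.1, x.2] f = 0}

/-- Zariski closure in `K²`: the set of points at which every polynomial
vanishing identically on `S` vanishes. -/
def zClosure (S : Set (K × K)) : Set (K × K) :=
  {x | ∀ f : MvPolynomial (Fin 2) K,
      (∀ y ∈ S, MvPolynomial.eval ![y.1, y.2] f = 0) →
      MvPolynomial.eval ![x.1, x.2] f = 0}

/-- `S` is Zariski closed in `K²`. -/
def IsZClosed (S : Set (K × K)) : Prop := zClosure S ⊆ S

/-- `S` is irreducible for the Zariski topology on `K²`: it is nonempty and is not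
covered by two Zariski-closed sets unless it is contained in one of them. -/
def IsZIrreducible (S : Set (K × K)) : Prop :=
  S.Nonempty ∧
  ∀ F₁ F₂ : Set (K × K), IsZClosed F₁ → IsZClosed F₂ → S ⊆ F₁ ∪ F₂ → S ⊆ F₁ ∨ S ⊆ F₂

/-- `M` is an irreducible component of `X`: a maximal Zariski-closed irreducible subset. -/
def IsComponent (X M : Set (K × K)) : Prop :=
  M ⊆ X ∧ IsZClosed M ∧ IsZIrreducible M ∧
  ∀ M' : Set (K × K), M' ⊆ X → IsZClosed M' → IsZIrreducible M' → M ⊆ M' → M' = M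

/-- `Ω` is a nonempty Zariski-dense subset of `M`. -/
def IsDenseIn (Ω M : Set (K × K)) : Prop :=
  Ω.Nonempty ∧ Ω ⊆ M ∧ M ⊆ zClosure Ω

/-- The conchoid incidence variety `B(C)` of the curve `C = zeroSet f` from the focus `A`
at distance `d`: triples `(x̄, ȳ, λ)` with `f(ȳ) = 0`, `‖x̄ − ȳ‖² = d²` and
`x̄ = A + λ(ȳ − A)`. -/
def incidence (f : MvPolynomial (Fin 2) K) (A : K × K) (d : K) :
    Set ((K × K) × (K × K) × K) :=
  {w | w.2.1 ∈ zeroSet f ∧ normSq (w.1 - w.2.1) = d ^ 2 ∧ w.1 = A + w.2.2 • (w.2.1 - A)}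

/-- The conchoid `𝔠(C,A,d)`: the Zariski closure of `π₁(B(C))`. -/
def conchoid (f : MvPolynomial (Fin 2) K) (A : K × K) (d : K) : Set (K × K) :=
  zClosure (Prod.fst '' incidence f A d)

/-- `S` is one of the two isotropic lines `y₁ ± √(-1) y₂ = 0`. -/
def IsIsotropicLine (S : Set (K × K)) : Prop :=
  ∃ s : K, s ^ 2 = -1 ∧ S = {y : K × K | y.1 + s * y.2 = 0}

/-- `S` is a line passing through the point `A`. -/
def IsLineThrough (S : Set (K × K)) (A : K × K) : Prop :=
  ∃ u v : K, (u ≠ 0 ∨ v ≠ 0) ∧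
    S = {y : K × K | u * (y.1 - A.1) + v * (y.2 - A.2) = 0}

/-- `S` is a line in `K²`. -/
def IsLine (S : Set (K × K)) : Prop :=
  ∃ u v w : K, (u ≠ 0 ∨ v ≠ 0) ∧ S = {y : K × K | u * y.1 + v * y.2 + w = 0}

/-- The circle of center `A` and radius `d`, i.e. `‖ȳ − A‖² = d²`. -/
def circleSet (A : K × K) (d : K) : Set (K × K) := {y : K × K | normSq (y - A) = d ^ 2}

/-- The point of `K²` obtained by evaluating the pair of rational functions `P` at `t`. -/
def ratPoint (P : RatFunc K × RatFunc K) (t : K) : K × K :=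
  (P.1.num.eval t / P.1.denom.eval t, P.2.num.eval t / P.2.denom.eval t)

/-- `t` avoids the poles of both components of `P`. -/
def PolesAvoided (P : RatFunc K × RatFunc K) (t : K) : Prop :=
  P.1.denom.eval t ≠ 0 ∧ P.2.denom.eval t ≠ 0

/-- The image of the pair of rational functions `P`, poles avoided. -/
def paramImage (P : RatFunc K × RatFunc K) : Set (K × K) :=
  {x | ∃ t : K, PolesAvoided P t ∧ x = ratPoint P t}

/-- `P ∈ K(t)²` is a rational parametrization of the set `S ⊆ K²`: its components are
not both constant, its image lies in `S`, and its image is Zariski dense in `S`. -/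
def IsParamOf (S : Set (K × K)) (P : RatFunc K × RatFunc K) : Prop :=
  (¬ ∃ c : K × K, P.1 = RatFunc.C c.1 ∧ P.2 = RatFunc.C c.2) ∧
  paramImage P ⊆ S ∧ S ⊆ zClosure (paramImage P)

/-- `S` is rational: it admits a rational parametrization. -/
def IsRationalSet (S : Set (K × K)) : Prop := ∃ P : RatFunc K × RatFunc K, IsParamOf S P

/-- `P` is proper: `K(P₁,P₂) = K(t)`. -/
def IsProper (P : RatFunc K × RatFunc K) : Prop :=
  IntermediateField.adjoin K {P.1, P.2} = ⊤

/-- `P` is at rational distance to the focus `A` (`A`-rdf):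
`(P₁ − a)² + (P₂ − b)² = m(t)²` for some rational function `m`. -/
def IsRDF (A : K × K) (P : RatFunc K × RatFunc K) : Prop :=
  ∃ m : RatFunc K, (P.1 - RatFunc.C A.1) ^ 2 + (P.2 - RatFunc.C A.2) ^ 2 = m ^ 2

/-- A field is trivially a normalized GCD monoid; this makes `K[x₁]` a normalized GCD
monoid, so that primitive parts w.r.t. `x₂` of polynomials in `K[x₁][x₂]` make sense. -/
noncomputable local instance : NormalizedGCDMonoid K := by
  classical exact (inferInstance : NormalizedGCDMonoid K)

/-- The numerator of `−2x₂(P₁(x₁) − a) + (x₂² − 1)(P₂(x₁) − b)`, written as a polynomial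
in `x₂` (outer variable) with coefficients in `K[x₁]` (inner variable). -/
def repNum (A : K × K) (P : RatFunc K × RatFunc K) : Polynomial (Polynomial K) :=
  Polynomial.C ((P.2 - RatFunc.C A.2).num * (P.1 - RatFunc.C A.1).denom) *
      (Polynomial.X ^ 2 - 1) +
    Polynomial.C (-2 * ((P.1 - RatFunc.C A.1).num * (P.2 - RatFunc.C A.2).denom)) *
      Polynomial.X

/-- Defining polynomial of the reparametrizing curve `𝔊(P)`: the primitive part with
respect to `x₂` of the numerator of `−2x₂(P₁(x₁) − a) + (x₂² − 1)(P₂(x₁) − b)`. -/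
def repPoly (A : K × K) (P : RatFunc K × RatFunc K) : Polynomial (Polynomial K) :=
  (repNum A P).primPart

/-- Zero set in the `(x₁,x₂)`-plane of `g ∈ K[x₁][x₂]` (`x₂` outer, `x₁` inner). -/
def zeroSetP (g : Polynomial (Polynomial K)) : Set (K × K) :=
  {x | Polynomial.eval₂ (Polynomial.evalRingHom x.1) x.2 g = 0}

/-- The reparametrizing curve `𝔊(P)` has at least one rational component, i.e. some
irreducible factor of its defining polynomial defines a rational curve. -/
def repHasRatComponent (A : K × K) (P : RatFunc K × RatFunc K) : Prop :=
  ∃ g : Polynomial (Polynomial K), Irreducible g ∧ g ∣ repPoly A P ∧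
    IsRationalSet (zeroSetP g)

/-- The reparametrizing curve `𝔊(P)` is rational: its defining polynomial is
irreducible and its zero set admits a rational parametrization. -/
def repIsRational (A : K × K) (P : RatFunc K × RatFunc K) : Prop :=
  Irreducible (repPoly A P) ∧ IsRationalSet (zeroSetP (repPoly A P))

/-- Composition `P ∘ φ` of rational functions. -/
def comp (P φ : RatFunc K) : RatFunc K :=
  Polynomial.aeval φ P.num / Polynomial.aeval φ P.denom

/-- `M` is a simple component of the conchoid: an irreducible component possessing a
nonempty Zariski-dense subset `Ω` such that each `Q ∈ Ω` has exactly one point in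
`π₂(π₁⁻¹(Q))`. -/
def IsSimpleComponent (f : MvPolynomial (Fin 2) K) (A : K × K) (d : K)
    (M : Set (K × K)) : Prop :=
  IsComponent (conchoid f A d) M ∧
  ∃ Ω : Set (K × K), IsDenseIn Ω M ∧
    ∀ Q ∈ Ω, ∃! y : K × K, ∃ l : K, (Q, y, l) ∈ incidence f A d

/-! Two parametrizations of the same set have the same kernel in `K[y₁, y₂]`: a polynomial
vanishes identically on `P(t)` iff it vanishes on the image of `P`, hence on its Zariski closure.
When both are proper, the two embeddings of the common quotient extend to isomorphisms of its
fraction field onto `K(t)`, so `Q = σ(P)` for a `K`-automorphism `σ` of `K(t)`. Applying `σ` to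
the coefficients of `−2x₂(P₁ − a) + (x₂² − 1)(P₂ − b) ∈ K(x₁)[x₂]` gives the same expression for
`Q`, and by Gauss's lemma an irreducible factor `g` of `𝔊(P)` goes to an irreducible factor `g'`
of `𝔊(Q)`. If `(χ₁, χ₂)` parametrizes `g = 0` then `(θ(χ₁), χ₂)` parametrizes `g' = 0`,
where `θ = σ⁻¹(x₁)`. -/

theorem _root_.RatFunc.X_ne_C (c : K) : RatFunc.X ≠ RatFunc.C c := fun h =>
  Polynomial.X_ne_C c <| RatFunc.algebraMap_injective K <|
    show algebraMap K[X] (RatFunc K) X = algebraMap K[X] (RatFunc K) (C c) by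
      rwa [RatFunc.algebraMap_X, RatFunc.algebraMap_C]

theorem _root_.RatFunc.algHom_C (φ : RatFunc K →ₐ[K] RatFunc K) (c : K) :
    φ (RatFunc.C c) = RatFunc.C c := by
  rw [← RatFunc.algebraMap_eq_C, φ.commutes]

theorem _root_.RatFunc.exists_algHom_X_eq {L : Type*} [Field L] [Algebra K L] {u : L}
    (hu : Transcendental K u) : ∃ φ : RatFunc K →ₐ[K] L, φ RatFunc.X = u :=
  ⟨(IntermediateField.val _).comp (RatFunc.algEquivOfTranscendental u hu).toAlgHom, by simp⟩

theorem _root_.Polynomial.map_aevalAeval {R A B : Type*} [CommSemiring R] [CommSemiring A]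
    [CommSemiring B] [Algebra R A] [Algebra R B] (φ : A →ₐ[R] B) (x y : A) (p : R[X][X]) :
    φ (aevalAeval x y p) = aevalAeval (φ x) (φ y) p := by
  have : φ.comp (aevalAeval x y) = aevalAeval (φ x) (φ y) :=
    (aevalAevalEquiv R B).symm.injective (by simp)
  exact DFunLike.congr_fun this p

theorem aevalAeval_algHom_X {L : Type*} [CommRing L] [Algebra K L] (ψ : RatFunc K →ₐ[K] L)
    (v : L) (g : K[X][X]) :
    aevalAeval (ψ RatFunc.X) v g = (g.map (algebraMap K[X] (RatFunc K))).eval₂ ψ v := by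
  have hC (p : K[X]) : aeval (ψ RatFunc.X) p = ψ (algebraMap K[X] (RatFunc K) p) := by
    rw [aeval_algHom_apply, ← RatFunc.algebraMap_X, aeval_algebraMap_apply, aeval_X_left_apply]
  have : ((aevalAeval (R := K) (ψ RatFunc.X) v : K[X][X] →ₐ[K] L) : K[X][X] →+* L) =
      (eval₂RingHom (ψ : RatFunc K →+* L) v).comp (mapRingHom (algebraMap K[X] (RatFunc K))) :=
    ringHom_ext (fun p => by simp [hC]) (by simp)
  exact DFunLike.congr_fun this g

theorem aevalAeval_algebraMap {L : Type*} [CommRing L] [Algebra K L] (c : K) (v : L)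
    (g : K[X][X]) : aevalAeval (algebraMap K L c) v g = aeval v (g.map (evalRingHom c)) := by
  have : ((aevalAeval (R := K) (algebraMap K L c) v : K[X][X] →ₐ[K] L) : K[X][X] →+* L) =
      (aeval v : K[X] →ₐ[K] L).toRingHom.comp (mapRingHom (evalRingHom c)) :=
    ringHom_ext (fun p => by simp [aeval_algebraMap_apply]) (by simp)
  exact DFunLike.congr_fun this g

open Bivariate in
theorem aeval_eq_aevalAeval_symm {L : Type*} [CommSemiring L] [Algebra K L] (u v : L)
    (F : MvPolynomial (Fin 2) K) :
    MvPolynomial.aeval ![u, v] F = aevalAeval u v ((equivMvPolynomial K).symm F) := by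
  have : MvPolynomial.aeval ![u, v] =
      (aevalAeval u v).comp (equivMvPolynomial K).symm.toAlgHom := by
    ext i
    fin_cases i <;> simp
  exact DFunLike.congr_fun this F

section GaussLemma

variable {R F : Type*} [CommRing R] [NormalizedGCDMonoid R] [Field F] [Algebra R F]
  [IsFractionRing R F]

theorem _root_.Polynomial.associated_map_primPart {p : R[X]} (hp : p ≠ 0) :
    Associated (p.primPart.map (algebraMap R F)) (p.map (algebraMap R F)) := by
  have hc : IsUnit (C (algebraMap R F p.content)) := isUnit_C.mpr <| isUnit_iff_ne_zero.mpr <|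
    (map_ne_zero_iff _ (IsFractionRing.injective R F)).mpr (content_eq_zero_iff.not.mpr hp)
  conv_rhs => rw [p.eq_C_content_mul_primPart, Polynomial.map_mul, map_C]
  exact associated_unit_mul_right _ _ hc

theorem _root_.Polynomial.exists_isPrimitive_associated_map [IsDomain R] {G : F[X]}
    (hG : G ≠ 0) : ∃ g : R[X], g.IsPrimitive ∧ Associated (g.map (algebraMap R F)) G := by
  obtain ⟨b, hbR, hb⟩ := IsLocalization.integerNormalization_spec (nonZeroDivisors R) G
  have hb0 : algebraMap R F b ≠ 0 :=
    (map_ne_zero_iff _ (IsFractionRing.injective R F)).mpr (nonZeroDivisors.ne_zero hbR)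
  set p := IsLocalization.integerNormalization (nonZeroDivisors R) G
  have hbG : p.map (algebraMap R F) = C (algebraMap R F b) * G := by
    rw [hb, ← smul_eq_C_mul, algebraMap_smul]
  have hp : p ≠ 0 := by
    rintro hp
    rw [hp, Polynomial.map_zero] at hbG
    exact mul_ne_zero (C_ne_zero.mpr hb0) hG hbG.symm
  refine ⟨p.primPart, isPrimitive_primPart p, (associated_map_primPart hp).trans ?_⟩
  rw [hbG]
  exact associated_unit_mul_left _ _ (isUnit_C.mpr (isUnit_iff_ne_zero.mpr hb0))

theorem _root_.Polynomial.IsPrimitive.dvd_of_eval₂_map_eq_zero [IsDomain R] {L : Type*} [Field L]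
    {g h : R[X]} (hg : g.IsPrimitive) (hirr : Irreducible g) (ψ : F →+* L) {v : L}
    (hgv : (g.map (algebraMap R F)).eval₂ ψ v = 0) (hhv : (h.map (algebraMap R F)).eval₂ ψ v = 0) :
    g ∣ h := by
  refine hg.dvd_of_fraction_map_dvd_fraction_map (K := F) (not_not.mp fun hnd => ?_)
  obtain ⟨a, b, hab⟩ :=
    ((hg.irreducible_iff_irreducible_map_fraction_map.mp hirr).coprime_iff_not_dvd).mpr hnd
  have := congrArg (eval₂ ψ v) hab
  rw [eval₂_add, eval₂_mul, eval₂_mul, hgv, hhv, eval₂_one] at this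
  simp at this

end GaussLemma

def regularAt (t : K) : Subalgebra K (RatFunc K) where
  carrier := {r | r.denom.eval t ≠ 0}
  mul_mem' {r s} hr hs := fun h => mul_ne_zero hr hs <| by
    simpa using eval_eq_zero_of_dvd_of_eval_eq_zero (RatFunc.denom_mul_dvd r s) h
  add_mem' {r s} hr hs := fun h => mul_ne_zero hr hs <| by
    simpa using eval_eq_zero_of_dvd_of_eval_eq_zero (RatFunc.denom_add_dvd r s) h
  algebraMap_mem' c := by simp [RatFunc.algebraMap_eq_C]

def evalAt (t : K) : regularAt t →ₐ[K] K where
  toFun r := RatFunc.eval (RingHom.id K) t r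
  map_one' := RatFunc.eval_one _ _
  map_mul' r s := RatFunc.eval_mul (f := RingHom.id K) (a := t) r.2 s.2
  map_zero' := RatFunc.eval_zero _ _
  map_add' r s := RatFunc.eval_add (f := RingHom.id K) (a := t) r.2 s.2
  commutes' c := by simp [RatFunc.algebraMap_eq_C]

theorem finite_setOf_not_polesAvoided (P : RatFunc K × RatFunc K) :
    {t | ¬ PolesAvoided P t}.Finite := by
  refine (finite_setOfPred_isRoot (mul_ne_zero P.1.denom_ne_zero P.2.denom_ne_zero)).subset ?_
  intro t ht
  simp only [PolesAvoided, not_and_or, not_not] at ht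
  rcases ht with h | h <;> simp [h]

theorem mem_zeroSetP {g : K[X][X]} {x : K × K} :
    x ∈ zeroSetP g ↔ aevalAeval x.1 x.2 g = 0 := by
  rw [coe_aevalAeval_eq_evalEval, ← eval₂_evalRingHom]
  rfl

theorem zeroSetP_subset_of_dvd {g h : K[X][X]} (hgh : g ∣ h) : zeroSetP g ⊆ zeroSetP h := by
  obtain ⟨k, rfl⟩ := hgh
  intro x hx
  rw [mem_zeroSetP] at hx ⊢
  rw [map_mul, hx, zero_mul]

theorem zeroSet_eq_zeroSetP (F : MvPolynomial (Fin 2) K) :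
    zeroSet F = zeroSetP ((Bivariate.equivMvPolynomial K).symm F) := by
  ext x
  rw [mem_zeroSetP, ← aeval_eq_aevalAeval_symm]
  rfl

theorem aevalAeval_eq_zero_iff [Infinite K] (P : RatFunc K × RatFunc K) (g : K[X][X]) :
    aevalAeval P.1 P.2 g = 0 ↔ paramImage P ⊆ zeroSetP g := by
  have key : ∀ t (ht : PolesAvoided P t),
      ∃ w : regularAt t, (w : RatFunc K) = aevalAeval P.1 P.2 g ∧
        evalAt t w = aevalAeval (ratPoint P t).1 (ratPoint P t).2 g :=
    fun t ht =>
      let u : regularAt t := ⟨P.1, ht.1⟩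
      let v : regularAt t := ⟨P.2, ht.2⟩
      ⟨aevalAeval u v g, map_aevalAeval (regularAt t).val u v g, map_aevalAeval (evalAt t) u v g⟩
  constructor
  · rintro hg _ ⟨t, ht, rfl⟩
    obtain ⟨w, hw, hw'⟩ := key t ht
    rw [mem_zeroSetP, ← hw', show w = 0 from Subtype.ext (hw.trans hg), map_zero]
  · -- the numerator of `g(P)` vanishes on the infinite set where `P` has no pole
    intro hg
    rw [← RatFunc.num_eq_zero_iff]
    refine eq_zero_of_infinite_isRoot _
      ((finite_setOf_not_polesAvoided P).infinite_compl.mono fun t ht => ?_)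
    replace ht : PolesAvoided P t := not_not.mp ht
    obtain ⟨w, hw, hw'⟩ := key t ht
    have hzero : evalAt t w = 0 := hw'.trans (mem_zeroSetP.mp (hg ⟨t, ht, rfl⟩))
    rw [← hw]
    exact (div_eq_zero_iff.mp hzero).resolve_right w.2

theorem aeval_eq_zero_iff [Infinite K] (P : RatFunc K × RatFunc K) (F : MvPolynomial (Fin 2) K) :
    MvPolynomial.aeval ![P.1, P.2] F = 0 ↔ paramImage P ⊆ zeroSet F := by
  rw [aeval_eq_aevalAeval_symm, aevalAeval_eq_zero_iff, zeroSet_eq_zeroSetP]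

theorem IsParamOf.aeval_eq_zero [Infinite K] {S : Set (K × K)} {P Q : RatFunc K × RatFunc K}
    (hP : IsParamOf S P) (hQ : IsParamOf S Q) {F : MvPolynomial (Fin 2) K}
    (hF : MvPolynomial.aeval ![P.1, P.2] F = 0) : MvPolynomial.aeval ![Q.1, Q.2] F = 0 := by
  rw [aeval_eq_zero_iff] at hF ⊢
  exact hQ.2.1.trans fun x hx => hP.2.2 hx F hF

theorem exists_algEquiv_fractionRing {B L : Type*} [CommRing B] [IsDomain B] [Algebra K B]
    [Field L] [Algebra K L] {χ : B →ₐ[K] L} (hχ : Function.Injective χ)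
    (htop : IntermediateField.adjoin K (Set.range χ) = ⊤) :
    ∃ e : FractionRing B ≃ₐ[K] L, ∀ b, e (algebraMap B _ b) = χ b := by
  let ι : FractionRing B →ₐ[K] L := IsFractionRing.liftAlgHom hχ
  have hsurj : Function.Surjective ι := by
    rw [← AlgHom.fieldRange_eq_top, eq_top_iff, ← htop, IntermediateField.adjoin_le_iff]
    rintro _ ⟨b, rfl⟩
    exact ⟨algebraMap B _ b, IsFractionRing.lift_algebraMap hχ b⟩
  exact ⟨AlgEquiv.ofBijective ι ⟨ι.injective, hsurj⟩, IsFractionRing.lift_algebraMap hχ⟩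

theorem exists_algEquiv_comp_eq_of_ker_eq {A L : Type*} [CommRing A] [Algebra K A] [Field L]
    [Algebra K L] {φ ψ : A →ₐ[K] L} (hker : RingHom.ker φ = RingHom.ker ψ)
    (hφ : IntermediateField.adjoin K (Set.range φ) = ⊤)
    (hψ : IntermediateField.adjoin K (Set.range ψ) = ⊤) :
    ∃ σ : L ≃ₐ[K] L, ∀ a, σ (φ a) = ψ a := by
  let B := A ⧸ RingHom.ker φ
  let φ' : B →ₐ[K] L := Ideal.kerLiftAlg φ
  let ψ' : B →ₐ[K] L := (Ideal.kerLiftAlg ψ).comp (Ideal.quotientEquivAlgOfEq K hker).toAlgHom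
  have hφ' : Function.Injective φ' := Ideal.kerLiftAlg_injective φ
  have : IsDomain B := hφ'.isDomain φ'.toRingHom
  have adjoin_eq_top {χ : A →ₐ[K] L} {χ' : B →ₐ[K] L} (h : ∀ a, χ' (Ideal.Quotient.mk _ a) = χ a)
      (htop : IntermediateField.adjoin K (Set.range χ) = ⊤) :
      IntermediateField.adjoin K (Set.range χ') = ⊤ :=
    top_le_iff.mp <| htop ▸ IntermediateField.adjoin.mono _ _ _
      (Set.range_subset_iff.mpr fun a => ⟨_, h a⟩)
  obtain ⟨eφ, heφ⟩ := exists_algEquiv_fractionRing hφ' (adjoin_eq_top (fun _ => rfl) hφ)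
  obtain ⟨eψ, heψ⟩ := exists_algEquiv_fractionRing
    ((Ideal.kerLiftAlg_injective ψ).comp (Ideal.quotientEquivAlgOfEq K hker).injective)
    (χ := ψ') (adjoin_eq_top (fun _ => rfl) hψ)
  refine ⟨eφ.symm.trans eψ, fun a => ?_⟩
  have hφa : φ a = eφ (algebraMap B _ (Ideal.Quotient.mk _ a)) :=
    (heφ (Ideal.Quotient.mk _ a)).symm
  rw [AlgEquiv.trans_apply, hφa, eφ.symm_apply_apply, heψ]
  rfl

theorem IsProper.adjoin_range_aeval {P : RatFunc K × RatFunc K} (hP : IsProper P) :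
    IntermediateField.adjoin K (Set.range (MvPolynomial.aeval (R := K) ![P.1, P.2])) = ⊤ := by
  refine top_le_iff.mp (hP ▸ IntermediateField.adjoin.mono _ _ _ ?_)
  rintro _ (rfl | rfl)
  exacts [⟨MvPolynomial.X 0, by simp⟩, ⟨MvPolynomial.X 1, by simp⟩]

theorem exists_algEquiv_of_isParamOf [Infinite K] {S : Set (K × K)}
    {P Q : RatFunc K × RatFunc K} (hP : IsParamOf S P) (hQ : IsParamOf S Q) (hPp : IsProper P)
    (hQp : IsProper Q) : ∃ σ : RatFunc K ≃ₐ[K] RatFunc K, σ P.1 = Q.1 ∧ σ P.2 = Q.2 := by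
  obtain ⟨σ, hσ⟩ := exists_algEquiv_comp_eq_of_ker_eq
    (Ideal.ext fun F => ⟨hP.aeval_eq_zero hQ, hQ.aeval_eq_zero hP⟩)
    hPp.adjoin_range_aeval hQp.adjoin_range_aeval
  exact ⟨σ, by simpa using hσ (MvPolynomial.X 0), by simpa using hσ (MvPolynomial.X 1)⟩

def repFrac (A : K × K) (P : RatFunc K × RatFunc K) : (RatFunc K)[X] :=
  C (P.2 - RatFunc.C A.2) * (X ^ 2 - 1) + C (-2 * (P.1 - RatFunc.C A.1)) * X

theorem map_repNum (A : K × K) (P : RatFunc K × RatFunc K) :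
    (repNum A P).map (algebraMap K[X] (RatFunc K)) =
      C (algebraMap K[X] (RatFunc K) ((P.1 - RatFunc.C A.1).denom * (P.2 - RatFunc.C A.2).denom))
        * repFrac A P := by
  have hnum (r : RatFunc K) :
      algebraMap K[X] (RatFunc K) r.num = r * algebraMap K[X] (RatFunc K) r.denom :=
    (div_eq_iff (RatFunc.algebraMap_ne_zero r.denom_ne_zero)).mp r.num_div_denom
  simp only [repNum, repFrac, Polynomial.map_add, Polynomial.map_mul, map_C, Polynomial.map_sub,
    Polynomial.map_pow, map_X, Polynomial.map_one, Polynomial.map_neg, Polynomial.map_ofNat,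
    map_mul, map_neg, map_ofNat, hnum]
  ring

theorem associated_map_repNum (A : K × K) (P : RatFunc K × RatFunc K) :
    Associated ((repNum A P).map (algebraMap K[X] (RatFunc K))) (repFrac A P) := by
  rw [map_repNum]
  refine associated_unit_mul_left (repFrac A P) _ (isUnit_C.mpr (isUnit_iff_ne_zero.mpr ?_))
  exact RatFunc.algebraMap_ne_zero (mul_ne_zero (RatFunc.denom_ne_zero _) (RatFunc.denom_ne_zero _))

theorem repFrac_eq_zero_iff (A : K × K) (P : RatFunc K × RatFunc K) :
    repFrac A P = 0 ↔ repNum A P = 0 := by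
  rw [← (associated_map_repNum A P).eq_zero_iff,
    Polynomial.map_eq_zero_iff (IsFractionRing.injective K[X] (RatFunc K))]

theorem map_repFrac (A : K × K) (P : RatFunc K × RatFunc K) (σ : RatFunc K →ₐ[K] RatFunc K) :
    (repFrac A P).map (σ : RatFunc K →+* RatFunc K) = repFrac A (σ P.1, σ P.2) := by
  simp [repFrac, RatFunc.algHom_C, map_ofNat]

theorem IsParamOf.transcendental_fst [Infinite K] {g : K[X][X]} (hg : g.IsPrimitive)
    {χ : RatFunc K × RatFunc K} (hχ : IsParamOf (zeroSetP g) χ) : Transcendental K χ.1 := by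
  refine RatFunc.transcendental_of_ne_C (f := χ.1) fun ⟨c, hc⟩ => ?_
  have h₂ : Transcendental K χ.2 :=
    RatFunc.transcendental_of_ne_C (f := χ.2) fun ⟨d, hd⟩ => hχ.1 ⟨(c, d), hc, hd⟩
  have hzero := (aevalAeval_eq_zero_iff χ g).mpr hχ.2.1
  rw [hc, ← RatFunc.algebraMap_eq_C, aevalAeval_algebraMap] at hzero
  have hmap : g.map (evalRingHom c) = 0 := not_not.mp fun hne => h₂ ⟨_, hne, hzero⟩
  refine not_isUnit_X_sub_C c (hg _ (C_dvd_iff_dvd_coeff _ _ |>.mpr fun i => ?_))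
  simpa [dvd_iff_isRoot] using congrArg (coeff · i) hmap

theorem isRationalSet_zeroSetP_of_dvd_map [Infinite K] (σ : RatFunc K ≃ₐ[K] RatFunc K)
    {g g' : K[X][X]} (hg : g.IsPrimitive) (hg' : g'.IsPrimitive) (hg'irr : Irreducible g')
    (hdvd : (g.map (algebraMap K[X] (RatFunc K))).map (σ : RatFunc K →+* RatFunc K) ∣
      g'.map (algebraMap K[X] (RatFunc K)))
    (hrat : IsRationalSet (zeroSetP g)) : IsRationalSet (zeroSetP g') := by
  obtain ⟨χ, hχ⟩ := hrat
  obtain ⟨φ, hφ⟩ := RatFunc.exists_algHom_X_eq (hχ.transcendental_fst hg)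
  -- `ψ r = (σ⁻¹ r)(χ₁)`, so that `ψ ∘ σ` is the substitution `x₁ ↦ χ₁`
  set ψ : RatFunc K →ₐ[K] RatFunc K := φ.comp σ.symm.toAlgHom
  have hψσ : (ψ : RatFunc K →+* RatFunc K).comp (σ : RatFunc K →+* RatFunc K) = φ := by
    ext r
    simp [ψ]
  have hg'ρ : aevalAeval (ψ RatFunc.X) χ.2 g' = 0 := by
    obtain ⟨k, hk⟩ := hdvd
    rw [aevalAeval_algHom_X, hk, eval₂_mul, eval₂_map, hψσ, ← aevalAeval_algHom_X, hφ,
      (aevalAeval_eq_zero_iff χ g).mpr hχ.2.1, zero_mul]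
  refine ⟨(ψ RatFunc.X, χ.2), ?_, (aevalAeval_eq_zero_iff _ g').mp hg'ρ, fun x hx F hF => ?_⟩
  · rintro ⟨c, hc, -⟩
    exact RatFunc.X_ne_C c.1 (ψ.toRingHom.injective (hc.trans (RatFunc.algHom_C ψ c.1).symm))
  · change paramImage _ ⊆ zeroSet F at hF
    change x ∈ zeroSet F
    rw [zeroSet_eq_zeroSetP] at hF ⊢
    have hG := (aevalAeval_eq_zero_iff _ _).mpr hF
    rw [aevalAeval_algHom_X] at hg'ρ hG
    exact zeroSetP_subset_of_dvd (hg'.dvd_of_eval₂_map_eq_zero hg'irr _ hg'ρ hG) hx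

theorem repHasRatComponent_of_algEquiv [Infinite K] (A : K × K) {P Q : RatFunc K × RatFunc K}
    (σ : RatFunc K ≃ₐ[K] RatFunc K) (h₁ : σ P.1 = Q.1) (h₂ : σ P.2 = Q.2)
    (h : repHasRatComponent A P) : repHasRatComponent A Q := by
  obtain ⟨g, hirr, hdvd, hrat⟩ := h
  have hP0 : repNum A P ≠ 0 := fun h0 =>
    hirr.not_isUnit (isUnit_of_dvd_one (by simpa [repPoly, h0] using hdvd))
  have hσ : (repFrac A P).map (σ : RatFunc K →+* RatFunc K) = repFrac A Q := by
    simpa [h₁, h₂] using map_repFrac A P σ.toAlgHom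
  have hQ0 : repNum A Q ≠ 0 := by
    rwa [Ne, ← repFrac_eq_zero_iff, ← hσ, Polynomial.map_eq_zero_iff σ.injective,
      repFrac_eq_zero_iff]
  have hg : g.IsPrimitive := isPrimitive_of_dvd (isPrimitive_primPart _) hdvd
  set G := (g.map (algebraMap K[X] (RatFunc K))).map (σ : RatFunc K →+* RatFunc K)
  have hGirr : Irreducible G := by
    simpa [G] using (hg.irreducible_iff_irreducible_map_fraction_map.mp hirr).map
      (mapEquiv (σ : RatFunc K ≃+* RatFunc K))
  obtain ⟨g', hg', hassoc⟩ := exists_isPrimitive_associated_map (R := K[X]) hGirr.ne_zero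
  have hg'irr : Irreducible g' :=
    hg'.irreducible_iff_irreducible_map_fraction_map.mpr (hassoc.irreducible_iff.mpr hGirr)
  have hGQ : G ∣ repFrac A Q := hσ ▸ Polynomial.map_dvd _ ((Polynomial.map_dvd _ hdvd).trans
    ((associated_map_primPart hP0).trans (associated_map_repNum A P)).dvd)
  refine ⟨g', hg'irr, hg'.dvd_of_fraction_map_dvd_fraction_map (K := RatFunc K) ?_,
    isRationalSet_zeroSetP_of_dvd_map σ hg hg' hg'irr hassoc.symm.dvd hrat⟩
  exact hassoc.dvd.trans
    (hGQ.trans ((associated_map_primPart hQ0).trans (associated_map_repNum A Q)).symm.dvd)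

theorem repCurve_rational_component_independent_of_param_general
    [IsAlgClosed K]
    (f : MvPolynomial (Fin 2) K) (A : K × K)
    (P Q : RatFunc K × RatFunc K)
    (hP : IsParamOf (zeroSet f) P) (hPproper : IsProper P)
    (hQ : IsParamOf (zeroSet f) Q) (hQproper : IsProper Q)
    (h : repHasRatComponent A P) :
    repHasRatComponent A Q := by
  obtain ⟨σ, h₁, h₂⟩ := exists_algEquiv_of_isParamOf hP hQ hPproper hQproper
  exact repHasRatComponent_of_algEquiv A σ h₁ h₂ h

/-- part of Theorem 5 of the paper, (3) ⇔ (4). If two proper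
parametrizations `P`, `Q` of `C` are given and `𝔊(P)` has a rational component, then
`𝔊(Q)` also has a rational component. -/
theorem repCurve_rational_component_independent_of_param
    [IsAlgClosed K] [CharZero K]
    (f : MvPolynomial (Fin 2) K) (A : K × K)
    (hf : Irreducible f)
    (hiso : ¬ IsIsotropicLine (zeroSet f))
    (hline : ¬ IsLineThrough (zeroSet f) A)
    (P Q : RatFunc K × RatFunc K)
    (hP : IsParamOf (zeroSet f) P) (hPproper : IsProper P)
    (hQ : IsParamOf (zeroSet f) Q) (hQproper : IsProper Q)
    (h : repHasRatComponent A P) :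
    repHasRatComponent A Q :=
  repCurve_rational_component_independent_of_param_general f A P Q hP hPproper hQ hQproper h

end ConchoidPaper
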